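/- Under the hypotheses of the preceding model, the conservation identity Σ_{i ∈ V} α_i (1 − ω_i) = Σ_{I ∈ Ind} π(I) α(E(I)) holds, and moreover Σ_{I ∈ Ind} π(I) α(E(I)) = Σ_{i ∈ V} α_i ω_i. -/

import Mathlib

/-! An independent set `I` with `i ∉ E(I)` either contains `i`, or `I ∪ {i}` is an independent
set containing `i`; hence `ω i = Σ_{I ∋ i} (π I + π (I \ {i}))`. Summing `α i ω i` over `i` and
exchanging the sums gives `Σ_I Σ_{i ∈ I} α i (π I + π (I \ {i}))`, which the recursion for `π`
turns into `Σ_I π I α(E(I))`. The first identity is the same exchange of sums applied to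
`1 - ω i = Σ_{I : i ∈ E(I)} π I`. -/

open Finset

def IsIndep {V : Type*} (G : SimpleGraph V) (I : Finset V) : Prop :=
  ∀ i ∈ I, ∀ j ∈ I, ¬ G.Adj i j

def nbhd {V : Type*} [Fintype V] [DecidableEq V] (G : SimpleGraph V) [DecidableRel G.Adj]
    (A : Finset V) : Finset V :=
  A.biUnion fun i => G.neighborFinset i

section IsIndep

variable {V : Type*} {G : SimpleGraph V}

theorem isIndep_empty : IsIndep G ∅ := by
  simp [IsIndep]

theorem IsIndep.subset {I J : Finset V} (hJ : IsIndep G J) (h : I ⊆ J) : IsIndep G I :=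
  fun i hi j hj => hJ i (h hi) j (h hj)

variable [Fintype V] [DecidablePred (IsIndep G)]

theorem filter_eq_empty_or_isIndep [DecidableEq V] :
    univ.filter (fun I : Finset V => I = ∅ ∨ IsIndep G I) = univ.filter (IsIndep G) := by
  ext I
  simp only [mem_filter, mem_univ, true_and, or_iff_right_iff_imp]
  rintro rfl
  exact isIndep_empty

theorem sum_filter_nonempty_isIndep {M : Type*} [AddCommMonoid M] (g : Finset V → M)
    (hg : g ∅ = 0) :
    ∑ I ∈ univ.filter (fun I => I.Nonempty ∧ IsIndep G I), g I =
      ∑ I ∈ univ.filter (IsIndep G), g I := by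
  refine sum_subset (fun I hI => ?_) (fun I hI hI' => ?_)
  · simp only [mem_filter, mem_univ, true_and] at hI ⊢
    exact hI.2
  · simp only [mem_filter, mem_univ, true_and, not_and] at hI hI'
    rw [not_nonempty_iff_eq_empty.1 (mt hI' (not_not.2 hI)), hg]

end IsIndep

section Nbhd

variable {V : Type*} [Fintype V] [DecidableEq V] {G : SimpleGraph V} [DecidableRel G.Adj]

theorem mem_nbhd {A : Finset V} {i : V} : i ∈ nbhd G A ↔ ∃ j ∈ A, G.Adj j i := by
  simp [nbhd, SimpleGraph.adj_comm]

theorem nbhd_empty : nbhd G ∅ = ∅ := by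
  simp [nbhd]

theorem nbhd_mono {I J : Finset V} (h : I ⊆ J) : nbhd G I ⊆ nbhd G J :=
  fun _ hx =>
    let ⟨j, hj, hadj⟩ := mem_nbhd.1 hx
    mem_nbhd.2 ⟨j, h hj, hadj⟩

theorem IsIndep.notMem_nbhd {I : Finset V} {i : V} (hI : IsIndep G I) (hi : i ∈ I) :
    i ∉ nbhd G I := fun h =>
  let ⟨j, hj, hadj⟩ := mem_nbhd.1 h
  hI j hj i hi hadj

theorem IsIndep.insert {I : Finset V} {i : V} (hI : IsIndep G I) (hi : i ∉ nbhd G I) :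
    IsIndep G (insert i I) := by
  intro a ha b hb hab
  rw [mem_insert] at ha hb
  rcases ha with rfl | ha <;> rcases hb with rfl | hb
  · exact G.irrefl hab
  · exact hi (mem_nbhd.2 ⟨b, hb, hab.symm⟩)
  · exact hi (mem_nbhd.2 ⟨a, ha, hab⟩)
  · exact hI a ha b hb hab

variable [DecidablePred (IsIndep G)] {M : Type*} [AddCommMonoid M]

theorem sum_isIndep_notMem_notMem_nbhd (f : Finset V → M) (i : V) :
    ∑ I ∈ ((univ.filter (IsIndep G)).filter fun I => i ∉ nbhd G I).filter (i ∉ ·), f I =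
      ∑ J ∈ (univ.filter (IsIndep G)).filter (i ∈ ·), f (J.erase i) := by
  refine sum_nbij' (insert i) (erase · i) (fun I hI => ?_) (fun J hJ => ?_)
    (fun I hI => ?_) (fun J hJ => ?_) (fun I hI => ?_) <;>
    simp only [mem_filter, mem_univ, true_and] at *
  · simpa using hI.1.1.insert hI.1.2
  · have hJi := hJ.1.notMem_nbhd hJ.2
    simpa using ⟨hJ.1.subset (erase_subset i J), fun h => hJi (nbhd_mono (erase_subset i J) h)⟩
  · exact erase_insert hI.2
  · exact insert_erase hJ.2
  · rw [erase_insert hI.2]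

theorem sum_isIndep_notMem_nbhd (f : Finset V → M) (i : V) :
    ∑ I ∈ (univ.filter (IsIndep G)).filter (fun I => i ∉ nbhd G I), f I =
      ∑ I ∈ (univ.filter (IsIndep G)).filter (i ∈ ·), (f I + f (I.erase i)) := by
  rw [← sum_filter_add_sum_filter_not _ (i ∈ ·), sum_isIndep_notMem_notMem_nbhd,
    sum_add_distrib, filter_filter]
  congr 1
  refine sum_congr (filter_congr fun I hI => ?_) fun _ _ => rfl
  simp only [mem_filter, mem_univ, true_and] at hI
  exact ⟨fun h => h.2, fun h => ⟨hI.notMem_nbhd h, h⟩⟩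

end Nbhd

theorem sum_mul_sum_filter_mem_comm {V ι R : Type*} [Fintype V] [DecidableEq V]
    [CommSemiring R] (s : Finset ι) (t : ι → Finset V) (a : V → R) (g : V → ι → R) :
    ∑ i, a i * ∑ I ∈ s.filter (fun I => i ∈ t I), g i I = ∑ I ∈ s, ∑ i ∈ t I, a i * g i I := by
  simp_rw [sum_filter, mul_sum, mul_ite, mul_zero]
  rw [sum_comm]
  simp_rw [sum_ite_mem, univ_inter]

theorem mul_sum_nbhd_eq_sum {V : Type*} [Fintype V] [DecidableEq V] {G : SimpleGraph V}
    [DecidableRel G.Adj] {α : V → ℝ} {π : Finset V → ℝ} {I : Finset V} (hI : IsIndep G I)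
    (hrec : I.Nonempty →
      π I * ((∑ j ∈ nbhd G I, α j) - ∑ i ∈ I, α i) = ∑ i ∈ I, α i * π (I.erase i)) :
    π I * ∑ j ∈ nbhd G I, α j = ∑ i ∈ I, α i * (π I + π (I.erase i)) := by
  rcases I.eq_empty_or_nonempty with rfl | hne
  · simp [nbhd_empty]
  · rw [sum_congr rfl fun i _ => mul_add (α i) _ _, sum_add_distrib, ← hrec hne, ← sum_mul]
    ring

theorem stmt12_general {V : Type*} [Fintype V] [DecidableEq V] (G : SimpleGraph V) [DecidableRel G.Adj]
    [DecidablePred (IsIndep G)]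
    (α : V → ℝ)
    (S : Finset (Finset V))
    (hS : S = (Finset.univ : Finset (Finset V)).filter (fun I => I = ∅ ∨ IsIndep G I))
    (Ind : Finset (Finset V))
    (hInd : Ind = (Finset.univ : Finset (Finset V)).filter
      (fun I => I.Nonempty ∧ IsIndep G I))
    (π : Finset V → ℝ)
    (hrec : ∀ I : Finset V, I.Nonempty → IsIndep G I →
      π I * ((∑ j ∈ nbhd G I, α j) - ∑ i ∈ I, α i) = ∑ i ∈ I, α i * π (I.erase i))
    (hnorm : ∑ I ∈ S, π I = 1)
    (ω : V → ℝ)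
    (hω : ∀ i, ω i = ∑ I ∈ S.filter (fun I => i ∉ nbhd G I), π I) :
    (∑ i, α i * (1 - ω i) = ∑ I ∈ Ind, π I * ∑ j ∈ nbhd G I, α j) ∧
    (∑ I ∈ Ind, π I * ∑ j ∈ nbhd G I, α j = ∑ i, α i * ω i) := by
  subst hS hInd
  rw [filter_eq_empty_or_isIndep] at hnorm hω
  rw [sum_filter_nonempty_isIndep _ (by simp [nbhd_empty])]
  have one_sub_ω : ∀ i, 1 - ω i =
      ∑ I ∈ (univ.filter (IsIndep G)).filter (fun I => i ∈ nbhd G I), π I := by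
    intro i
    rw [hω, ← hnorm, ← sum_filter_add_sum_filter_not _ (fun I => i ∈ nbhd G I)]
    ring
  have ω_eq : ∀ i, ω i =
      ∑ I ∈ (univ.filter (IsIndep G)).filter (fun I => i ∈ I), (π I + π (I.erase i)) :=
    fun i => (hω i).trans (sum_isIndep_notMem_nbhd π i)
  constructor
  · simp_rw [one_sub_ω, sum_mul_sum_filter_mem_comm _ (nbhd G) α fun _ I => π I, mul_sum]
    exact sum_congr rfl fun I _ => sum_congr rfl fun i _ => mul_comm _ _
  · simp_rw [ω_eq]
    refine ((sum_mul_sum_filter_mem_comm _ id α fun i I => π I + π (I.erase i)).trans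
      (sum_congr rfl fun I hI => ?_)).symm
    have hI : IsIndep G I := (mem_filter.1 hI).2
    exact (mul_sum_nbhd_eq_sum hI (hrec I · hI)).symm

/-- Conservation identity: `Σ_i α_i (1 − ω_i) = Σ_{I ∈ Ind} π(I) α(E(I))`, and this
common value also equals `Σ_i α_i ω_i`. -/
theorem stmt12 {V : Type*} [Fintype V] [DecidableEq V] (G : SimpleGraph V) [DecidableRel G.Adj]
    [DecidablePred (IsIndep G)]
    (α : V → ℝ) (hα : ∀ i, 0 < α i) (hα1 : ∑ i, α i = 1)
    (hstab : ∀ I : Finset V, I.Nonempty → IsIndep G I →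
      ∑ i ∈ I, α i < ∑ j ∈ nbhd G I, α j)
    (S : Finset (Finset V))
    (hS : S = (Finset.univ : Finset (Finset V)).filter (fun I => I = ∅ ∨ IsIndep G I))
    (Ind : Finset (Finset V))
    (hInd : Ind = (Finset.univ : Finset (Finset V)).filter
      (fun I => I.Nonempty ∧ IsIndep G I))
    (π : Finset V → ℝ)
    (hπpos : ∀ I ∈ S, 0 ≤ π I)
    (hrec : ∀ I : Finset V, I.Nonempty → IsIndep G I →
      π I * ((∑ j ∈ nbhd G I, α j) - ∑ i ∈ I, α i) = ∑ i ∈ I, α i * π (I.erase i))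
    (hnorm : ∑ I ∈ S, π I = 1)
    (ω : V → ℝ)
    (hω : ∀ i, ω i = ∑ I ∈ S.filter (fun I => i ∉ nbhd G I), π I) :
    (∑ i, α i * (1 - ω i) = ∑ I ∈ Ind, π I * ∑ j ∈ nbhd G I, α j) ∧
    (∑ I ∈ Ind, π I * ∑ j ∈ nbhd G I, α j = ∑ i, α i * ω i) :=
  stmt12_general G α S hS Ind hInd π hrec hnorm ω hω
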